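/- The map Θ : ℝ × M × S(M) → X defined by Θ(s, x, φ) = ℓ((φ_k^{s,x})_{k∈ℕ}) is measurable, and for all (s, φ): (a) Θ(s, x, φ) ∈ C([s,∞) : M) with Θ(s, x, φ)(s) = x for every x ∈ M; (b) Θ(s, φ_n(s), φ) = φ_n restricted to [s,∞) for every n with s_n ≤ s. -/

import Mathlib

open Set Filter MeasureTheory

noncomputable section

variable {M : Type*} [MetricSpace M] [ProperSpace M] [TopologicalSpace.SeparableSpace M]
  [MeasurableSpace M] [BorelSpace M]

instance : MeasurableSpace C(ℝ, M) := borel _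
instance : BorelSpace C(ℝ, M) := ⟨rfl⟩

/-- Representation of a path: a starting time together with a continuous map `ℝ → M`
(its constant-before-the-start extension). -/
abbrev PathP (M : Type*) [MetricSpace M] : Type _ := ℝ × C(ℝ, M)

/-- Restriction of a path to `[r, ∞)`, as an element of the path space. -/
def restrictP (p : PathP M) (r : ℝ) : PathP M :=
  (r, p.2.comp ⟨fun t => max r t, continuous_const.max continuous_id⟩)

/-- The set `S(M)` of skeletons: sequences of paths satisfying constancy before the
starting time together with (Sk1) coalescence, (Sk2) denseness of the starting points,
and (Sk3) relative compactness of restrictions over compact sets. -/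
def SkelSet (M : Type*) [MetricSpace M] : Set (ℕ → PathP M) :=
  {φ | (∀ n, ∀ t ≤ (φ n).1, (φ n).2 t = (φ n).2 (φ n).1) ∧
    (∀ m n r, (φ m).1 ≤ r → (φ n).1 ≤ r → (φ m).2 r = (φ n).2 r →
      ∀ t, r ≤ t → (φ m).2 t = (φ n).2 t) ∧
    Dense {q : ℝ × M | ∃ n, q = ((φ n).1, (φ n).2 (φ n).1)} ∧
    ∀ L : Set (ℝ × M), IsCompact L →
      IsCompact (closure {p : PathP M | ∃ n r, (φ n).1 ≤ r ∧ (r, (φ n).2 r) ∈ L ∧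
        p = restrictP (φ n) r})}

/-- The measurable space of skeletons. -/
abbrev Skel (M : Type*) [MetricSpace M] : Type _ := (SkelSet M : Set (ℕ → PathP M))

/-- `n_k^{s,x}`: the first index `n ∈ I^s` with `ρ(φ_n(s), x) < ε_k(x)`. -/
def nIdx (ε : ℕ → M → ℝ) (r : ℝ) (x : M) (φ : ℕ → PathP M) (k : ℕ) : ℕ :=
  sInf {n : ℕ | (φ n).1 ≤ r ∧ dist ((φ n).2 r) x < ε k x}

/-- The map `Θ(s, x, φ) = ℓ((φ^{s,x}_k)_k)`, where `φ^{s,x}_k = φ_{n_k^{s,x}}[s,∞)`. -/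
def Theta (ℓ : (ℕ → PathP M) → PathP M) (ε : ℕ → M → ℝ)
    (q : ℝ × M × Skel M) : PathP M :=
  ℓ (fun k => restrictP (q.2.2.val (nIdx ε q.1 q.2.1 q.2.2.val k)) q.1)

/-! By (Sk2) the paths of a skeleton start densely in `ℝ × M`, and by (Sk3) those starting
just before time `s` near `x` cluster at a path through `x` at time `s`; hence the values at `s`
of the paths alive at `s` are dense in `M` and every index `n_k^{s,x}` exists. Then
`φ_k^{s,x}(s) → x`, so by (Sk3) the sequence `φ_k^{s,x}` is relatively compact and each of its
limit points, in particular `Θ(s,x,φ)`, starts at `s` from `x`. For `x = φ_n(s)` all indices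
`n_k^{s,x}` are at most `n`, so `φ_k^{s,x}(s) = φ_n(s)` eventually, and coalescence (Sk1) makes
`φ_k^{s,x}` eventually equal to `φ_n[s,∞)`. Measurability follows because `n_k^{s,x}` is the first
index satisfying a measurable condition and restriction is jointly continuous. -/

theorem MapClusterPt.eq_of_tendsto {X ι : Type*} [TopologicalSpace X] [T2Space X]
    {F : Filter ι} [F.NeBot] {u : ι → X} {a b : X} (ha : MapClusterPt a F u)
    (hb : Tendsto u F (nhds b)) : a = b :=
  eq_of_nhds_neBot <| (show (nhds a ⊓ map u F).NeBot from ha).mono (inf_le_inf_left _ hb)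

theorem Filter.Tendsto.eventually_eq_of_mem_finite {X ι : Type*} [TopologicalSpace X]
    [T1Space X] {l : Filter ι} {u : ι → X} {s : Set X} {x : X} (hs : s.Finite)
    (hu : ∀ i, u i ∈ s) (hx : Tendsto u l (nhds x)) : ∀ᶠ i in l, u i = x := by
  have hnhds : (s \ {x})ᶜ ∈ nhds x :=
    (hs.sdiff.isClosed.isOpen_compl).mem_nhds fun h => h.2 rfl
  filter_upwards [hx hnhds] with i hi
  by_contra hne
  exact hi ⟨hu i, hne⟩

theorem measurable_sInf_setOf_mem {α : Type*} [MeasurableSpace α] {A : ℕ → Set α}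
    (hne : ∀ a, ∃ n, a ∈ A n) (hA : ∀ n, MeasurableSet (A n)) :
    Measurable fun a => sInf {n | a ∈ A n} := by
  classical
  rw [show (fun a => sInf {n | a ∈ A n}) = fun a => Nat.find (hne a) from
    funext fun a => Nat.sInf_def (hne a)]
  exact measurable_find hne hA

theorem Measurable.apply_nat {α X : Type*} [MeasurableSpace α] [MeasurableSpace X]
    {f : α → ℕ → X} (hf : Measurable f) {g : α → ℕ} (hg : Measurable g) :
    Measurable fun a => f a (g a) :=
  (measurable_from_prod_countable_left (f := fun q : α × ℕ => f q.1 q.2)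
    fun n => measurable_pi_apply n |>.comp hf).comp (measurable_id.prodMk hg)

section PathSpace

variable {X : Type*} [MetricSpace X]

theorem continuous_restrictP : Continuous fun q : PathP X × ℝ => restrictP q.1 q.2 := by
  refine continuous_snd.prodMk ?_
  have hmax : Continuous fun r : ℝ => (⟨fun t => max r t, by fun_prop⟩ : C(ℝ, ℝ)) :=
    ContinuousMap.continuous_of_continuous_uncurry _ (continuous_fst.max continuous_snd)
  exact ContinuousMap.continuous_comp'.comp
    ((hmax.comp continuous_snd).prodMk (continuous_snd.comp continuous_fst))

@[simp]
theorem restrictP_fst (p : PathP X) (r : ℝ) : (restrictP p r).1 = r := rfl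

theorem restrictP_apply (p : PathP X) (r t : ℝ) : (restrictP p r).2 t = p.2 (max r t) := rfl

theorem restrictP_apply_of_le (p : PathP X) {r t : ℝ} (h : t ≤ r) :
    (restrictP p r).2 t = p.2 r := by
  rw [restrictP_apply, max_eq_left h]

theorem restrictP_congr {p q : PathP X} {r : ℝ} (h : ∀ t, r ≤ t → p.2 t = q.2 t) :
    restrictP p r = restrictP q r := by
  refine Prod.ext rfl (ContinuousMap.ext fun t => ?_)
  exact h _ (le_max_left r t)

theorem continuous_eval_start : Continuous fun p : PathP X => (p.1, p.2 p.1) :=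
  continuous_fst.prodMk (continuous_eval.comp (continuous_snd.prodMk continuous_fst))

theorem eval_start_restrictP (p : PathP X) (r : ℝ) :
    ((restrictP p r).1, (restrictP p r).2 (restrictP p r).1) = (r, p.2 r) := by
  rw [restrictP_fst, restrictP_apply_of_le p le_rfl]

theorem MapClusterPt.restrictP_eq {p : ℕ → PathP X} {r : ℝ} {x : X} {a : PathP X}
    (ha : MapClusterPt a atTop fun k => restrictP (p k) r)
    (hx : Tendsto (fun k => (p k).2 r) atTop (nhds x)) :
    a.1 = r ∧ ∀ t ≤ r, a.2 t = x := by
  have hfst : a.1 = r :=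
    (ha.continuousAt_comp continuous_fst.continuousAt).eq_of_tendsto tendsto_const_nhds
  refine ⟨hfst, fun t ht => ?_⟩
  have heval := ha.continuousAt_comp
    ((continuous_eval_const t).comp continuous_snd).continuousAt
  refine heval.eq_of_tendsto (hx.congr fun k => ?_)
  exact (restrictP_apply_of_le (p k) ht).symm

end PathSpace

section nIdx

variable {X : Type*} [MetricSpace X] {ε : ℕ → X → ℝ} {φ : ℕ → PathP X} {r : ℝ} {x : X} {k : ℕ}

theorem nIdx_spec_of_exists (h : ∃ n, (φ n).1 ≤ r ∧ dist ((φ n).2 r) x < ε k x) :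
    (φ (nIdx ε r x φ k)).1 ≤ r ∧ dist ((φ (nIdx ε r x φ k)).2 r) x < ε k x :=
  Nat.sInf_mem h

theorem nIdx_le {n : ℕ} (hn : (φ n).1 ≤ r) (hε : 0 < ε k ((φ n).2 r)) :
    nIdx ε r ((φ n).2 r) φ k ≤ n :=
  Nat.sInf_le ⟨hn, by rwa [dist_self]⟩

end nIdx

namespace SkelSet

variable {X : Type*} [MetricSpace X] {φ : ℕ → PathP X}

theorem restrictP_eq (hφ : φ ∈ SkelSet X) {m n : ℕ} {r : ℝ} (hm : (φ m).1 ≤ r)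
    (hn : (φ n).1 ≤ r) (h : (φ m).2 r = (φ n).2 r) : restrictP (φ m) r = restrictP (φ n) r :=
  restrictP_congr (hφ.2.1 m n r hm hn h)

theorem isCompact_closure_range_restrictP (hφ : φ ∈ SkelSet X) {m : ℕ → ℕ} {r : ℝ} {x : X}
    (hm : ∀ k, (φ (m k)).1 ≤ r) (hx : Tendsto (fun k => (φ (m k)).2 r) atTop (nhds x)) :
    IsCompact (closure (range fun k => restrictP (φ (m k)) r)) := by
  have hL : IsCompact (({r} : Set ℝ) ×ˢ insert x (range fun k => (φ (m k)).2 r)) :=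
    isCompact_singleton.prod hx.isCompact_insert_range
  refine (hφ.2.2.2 _ hL).of_isClosed_subset isClosed_closure (closure_mono ?_)
  rintro _ ⟨k, rfl⟩
  exact ⟨m k, r, hm k, ⟨rfl, mem_insert_of_mem _ ⟨k, rfl⟩⟩, rfl⟩

theorem mem_closure_eval (hφ : φ ∈ SkelSet X) (r : ℝ) (x : X) :
    x ∈ closure ((fun n => (φ n).2 r) '' {n | (φ n).1 ≤ r}) := by
  have hU : IsOpen (Iio r ×ˢ univ : Set (ℝ × X)) := isOpen_Iio.prod isOpen_univ
  have hrx : (r, x) ∈ closure ((Iio r ×ˢ univ) ∩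
      {q : ℝ × X | ∃ n, q = ((φ n).1, (φ n).2 (φ n).1)}) :=
    closure_minimal (hφ.2.2.1.open_subset_closure_inter hU) isClosed_closure
      (by simp [closure_prod_eq])
  obtain ⟨q, hqD, hq⟩ := mem_closure_iff_seq_limit.1 hrx
  choose n hn using fun j => (hqD j).2
  have hlt : ∀ j, (φ (n j)).1 < r := fun j => by simpa [hn j] using (hqD j).1.1
  set ψ : ℕ → PathP X := fun j => restrictP (φ (n j)) (φ (n j)).1
  obtain ⟨a, -, ha⟩ := (hφ.2.2.2 _ hq.isCompact_insert_range).exists_mapClusterPt_of_frequently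
    (f := ψ) (l := atTop) (Frequently.of_forall fun j =>
      subset_closure ⟨n j, _, le_rfl, by rw [← hn j]; exact mem_insert_of_mem _ ⟨j, rfl⟩, rfl⟩)
  have hstart : (a.1, a.2 a.1) = (r, x) :=
    (ha.continuousAt_comp continuous_eval_start.continuousAt).eq_of_tendsto
      (hq.congr fun j => by rw [hn j]; exact (eval_start_restrictP _ _).symm)
  simp only [Prod.mk.injEq] at hstart
  have heval := ha.continuousAt_comp ((continuous_eval_const r).comp continuous_snd).continuousAt
  rw [Function.comp_apply, ← hstart.1, hstart.2] at heval
  refine isClosed_closure.mem_of_mapClusterPt heval (Eventually.of_forall fun j => ?_)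
  refine subset_closure ⟨n j, (hlt j).le, ?_⟩
  simp [ψ, restrictP_apply, max_eq_right (hlt j).le, hstart.1]

variable {ε : ℕ → X → ℝ} {r : ℝ} {x : X}

theorem nIdx_spec (hφ : φ ∈ SkelSet X) {k : ℕ} (hε : 0 < ε k x) :
    (φ (nIdx ε r x φ k)).1 ≤ r ∧ dist ((φ (nIdx ε r x φ k)).2 r) x < ε k x := by
  obtain ⟨_, ⟨n, hn, rfl⟩, hd⟩ := Metric.mem_closure_iff.1 (mem_closure_eval hφ r x) _ hε
  exact nIdx_spec_of_exists ⟨n, hn, by rwa [dist_comm]⟩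

theorem tendsto_eval_nIdx (hφ : φ ∈ SkelSet X) (hεpos : ∀ k, 0 < ε k x)
    (hεlim : Tendsto (fun k => ε k x) atTop (nhds 0)) :
    Tendsto (fun k => (φ (nIdx ε r x φ k)).2 r) atTop (nhds x) :=
  tendsto_iff_dist_tendsto_zero.2 <| squeeze_zero (fun _ => dist_nonneg)
    (fun k => (nIdx_spec hφ (hεpos k)).2.le) hεlim

theorem tendsto_restrictP_nIdx_eval (hφ : φ ∈ SkelSet X) {n : ℕ} (hn : (φ n).1 ≤ r)
    (hεpos : ∀ k, 0 < ε k ((φ n).2 r))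
    (hεlim : Tendsto (fun k => ε k ((φ n).2 r)) atTop (nhds 0)) :
    Tendsto (fun k => restrictP (φ (nIdx ε r ((φ n).2 r) φ k)) r) atTop
      (nhds (restrictP (φ n) r)) := by
  have hfin : ((fun i => (φ i).2 r) '' Iic n).Finite := (finite_Iic n).image _
  have heq := (tendsto_eval_nIdx hφ hεpos hεlim).eventually_eq_of_mem_finite hfin
    fun k => mem_image_of_mem _ (nIdx_le hn (hεpos k))
  refine tendsto_const_nhds.congr' (heq.mono fun k hk => ?_)
  exact (restrictP_eq hφ (nIdx_spec hφ (hεpos k)).1 hn hk).symm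

end SkelSet

section Measurability

variable {X : Type*} [MetricSpace X] [TopologicalSpace.SeparableSpace X] [MeasurableSpace X]
  [BorelSpace X] {ε : ℕ → X → ℝ}

theorem measurable_nIdx {k : ℕ} (hεmeas : Measurable (ε k)) (hεpos : ∀ x, 0 < ε k x) :
    Measurable fun q : ℝ × X × Skel X => nIdx ε q.1 q.2.1 q.2.2.val k := by
  have hφ : Measurable fun q : ℝ × X × Skel X => q.2.2.val :=
    measurable_subtype_coe.comp (measurable_snd.comp measurable_snd)
  have hx : Measurable fun q : ℝ × X × Skel X => q.2.1 := measurable_fst.comp measurable_snd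
  refine measurable_sInf_setOf_mem (fun q => ⟨_, SkelSet.nIdx_spec q.2.2.2 (hεpos q.2.1)⟩)
    fun n => ?_
  have hφn : Measurable fun q : ℝ × X × Skel X => q.2.2.val n := (measurable_pi_apply n).comp hφ
  have heval : Measurable fun q : ℝ × X × Skel X => (q.2.2.val n).2 q.1 :=
    continuous_eval.measurable.comp ((measurable_snd.comp hφn).prodMk measurable_fst)
  exact (measurableSet_le (measurable_fst.comp hφn) measurable_fst).inter
    (measurableSet_lt (measurable_dist.comp (heval.prodMk hx)) (hεmeas.comp hx))

theorem measurable_Theta {ℓ : (ℕ → PathP X) → PathP X} (hℓ : Measurable ℓ)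
    (hεmeas : ∀ k, Measurable (ε k)) (hεpos : ∀ k x, 0 < ε k x) :
    Measurable (Theta ℓ ε) := by
  refine hℓ.comp (measurable_pi_lambda _ fun k => ?_)
  have hφ : Measurable fun q : ℝ × X × Skel X => q.2.2.val :=
    measurable_subtype_coe.comp (measurable_snd.comp measurable_snd)
  exact continuous_restrictP.measurable.comp
    ((hφ.apply_nat (measurable_nIdx (hεmeas k) (hεpos k))).prodMk measurable_fst)

end Measurability

theorem Theta_measurable_and_extends_general
    (ℓ : (ℕ → PathP M) → PathP M) (hℓmeas : Measurable ℓ)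
    (hℓsel : ∀ u : ℕ → PathP M, IsCompact (closure (Set.range u)) →
      MapClusterPt (ℓ u) atTop u)
    (ε : ℕ → M → ℝ) (hεmeas : ∀ k, Measurable (ε k))
    (hεpos : ∀ k x, 0 < ε k x)
    (hεlim : ∀ x, Tendsto (fun k => ε k x) atTop (nhds 0)) :
    Measurable (Theta (M := M) ℓ ε) ∧
    (∀ (r : ℝ) (x : M) (φ : Skel M),
      (Theta ℓ ε (r, x, φ)).1 = r ∧
      (Theta ℓ ε (r, x, φ)).2 r = x ∧
      ∀ t ≤ r, (Theta ℓ ε (r, x, φ)).2 t = (Theta ℓ ε (r, x, φ)).2 r) ∧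
    (∀ (r : ℝ) (φ : Skel M) (n : ℕ), (φ.val n).1 ≤ r →
      Theta ℓ ε (r, (φ.val n).2 r, φ) = restrictP (φ.val n) r) := by
  have hcluster : ∀ (r : ℝ) (x : M) (φ : Skel M),
      MapClusterPt (Theta ℓ ε (r, x, φ)) atTop
        fun k => restrictP (φ.val (nIdx ε r x φ.val k)) r := fun r x φ =>
    hℓsel _ <| SkelSet.isCompact_closure_range_restrictP φ.2
      (fun k => (SkelSet.nIdx_spec φ.2 (hεpos k x)).1)
      (SkelSet.tendsto_eval_nIdx φ.2 (hεpos · x) (hεlim x))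
  refine ⟨measurable_Theta hℓmeas hεmeas hεpos, fun r x φ => ?_, fun r φ n hn => ?_⟩
  · obtain ⟨hstart, hpast⟩ :=
      (hcluster r x φ).restrictP_eq (SkelSet.tendsto_eval_nIdx φ.2 (hεpos · x) (hεlim x))
    exact ⟨hstart, hpast r le_rfl, fun t ht => (hpast t ht).trans (hpast r le_rfl).symm⟩
  · exact (hcluster r _ φ).eq_of_tendsto
      (SkelSet.tendsto_restrictP_nIdx_eval φ.2 hn (hεpos · _) (hεlim _))

/-- **Measurability and properties of `Θ`.** Let `ℓ` be a measurable limit-point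
selection on the path space and `(ε_k)` a nonincreasing sequence of positive measurable
functions converging pointwise to `0`.  Then the map
`Θ : ℝ × M × S(M) → X`, `Θ(s,x,φ) = ℓ((φ^{s,x}_k)_k)`, is measurable, and for every
`(s, φ)`: (a) `Θ(s,x,φ)` is a path of `C([s,∞) : M)` starting at `x`, for every `x`;
(b) `Θ(s, φ_n(s), φ) = φ_n[s,∞)` for every `n` with `s_n ≤ s`. -/
theorem Theta_measurable_and_extends
    (ℓ : (ℕ → PathP M) → PathP M) (hℓmeas : Measurable ℓ)
    (hℓsel : ∀ u : ℕ → PathP M, IsCompact (closure (Set.range u)) →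
      MapClusterPt (ℓ u) atTop u)
    (ε : ℕ → M → ℝ) (hεmeas : ∀ k, Measurable (ε k))
    (hεanti : ∀ x, Antitone fun k => ε k x)
    (hεpos : ∀ k x, 0 < ε k x)
    (hεlim : ∀ x, Tendsto (fun k => ε k x) atTop (nhds 0)) :
    Measurable (Theta (M := M) ℓ ε) ∧
    (∀ (r : ℝ) (x : M) (φ : Skel M),
      (Theta ℓ ε (r, x, φ)).1 = r ∧
      (Theta ℓ ε (r, x, φ)).2 r = x ∧
      ∀ t ≤ r, (Theta ℓ ε (r, x, φ)).2 t = (Theta ℓ ε (r, x, φ)).2 r) ∧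
    (∀ (r : ℝ) (φ : Skel M) (n : ℕ), (φ.val n).1 ≤ r →
      Theta ℓ ε (r, (φ.val n).2 r, φ) = restrictP (φ.val n) r) :=
  Theta_measurable_and_extends_general ℓ hℓmeas hℓsel ε hεmeas hεpos hεlim

end
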